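/- Let (i, i') ∈ A \ (O ∪ S) and set g := R(i') − R(i). Then g ≥ 1, and for all nonnegative integers n_L and n_R with n_R < g, the pair of expanded intervals ({L(i) − n_L, ..., R(i) + n_R}, {L(i') − n_R, ..., R(i') + n_L}) belongs to A \ (O ∪ S); in particular the second interval is the reflection ρ of the first. -/
import Mathlib


/- Finite integer intervals: `none` = empty set, `some (l, r)` with `l ≤ r`
represents the interval {l, ..., r}. -/

namespace RFI

abbrev State := Option (ℤ × ℤ)

/-- The reflection ρ about -1/2: ρ({l, ..., r}) = {-1-r, ..., -1-l}, ρ(∅) = ∅. -/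
def rho : State → State
  | none => none
  | some (l, r) => some (-1 - r, -1 - l)

/-- The set of integers represented by a state. -/
def toSet : State → Set ℤ
  | none => ∅
  | some (l, r) => Set.Icc l r

/-- A state is valid when it is the empty set or a nonempty interval `some (l, r)`,
`l ≤ r`. -/
def IsValid (s : State) : Prop := s = none ∨ ∃ l r : ℤ, l ≤ r ∧ s = some (l, r)

/-- The pair (i, i') belongs to A: i' = ρ(i), and either i = i' = ∅, or i is a
nonempty interval with L(i) ≤ -1 and R(i) ≤ -1 - L(i). -/
def memA (i i' : State) : Prop :=
  i' = rho i ∧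
    (i = none ∨ ∃ l r : ℤ, l ≤ r ∧ i = some (l, r) ∧ l ≤ -1 ∧ r ≤ -1 - l)

/-- `j ∈ F(i)`: j is an integer subinterval of i, including the empty set. -/
def memF (i j : State) : Prop := IsValid j ∧ toSet j ⊆ toSet i

open Classical in
/-- The map ψ : F(i) → F(i'): ψ(j) = j if j = ∅ or j ⊆ i ∩ i', and ψ(j) = ρ(j)
otherwise. -/
noncomputable def psi (i i' j : State) : State :=
  if j = none ∨ toSet j ⊆ toSet i ∩ toSet i' then j else rho j

/-- for (i, i') ∈ A \ (O ∪ S), with i = {l, ..., r} and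
i' = {l', ..., r'}, the gap g = r' - r satisfies g ≥ 1, and for all nonnegative
integers n_L, n_R with n_R < g, the expanded pair
({l - n_L, ..., r + n_R}, {l' - n_R, ..., r' + n_L}) is again in A \ (O ∪ S);
in particular the second interval is the reflection ρ of the first. -/
theorem expansion_stays_in_A (l r l' r' : ℤ)
    (hA : memA (some (l, r)) (some (l', r')))
    (hS : some (l', r') ≠ some (l, r)) :
    1 ≤ r' - r ∧
    ∀ nL nR : ℕ, (nR : ℤ) < r' - r →
      memA (some (l - nL, r + nR)) (some (l' - nR, r' + nL)) ∧
      some (l' - nR, r' + nL) ≠ some (l - nL, r + nR) ∧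
      some (l' - nR, r' + nL) = rho (some (l - nL, r + nR)) := by

  obtain ⟨hrho, hcond⟩ := hA
  simp only [rho, Option.some.injEq, Prod.mk.injEq] at hrho
  obtain ⟨hl', hr'⟩ := hrho
  rcases hcond with h | ⟨a, b, hab, heq, ha1, hab2⟩
  · exact absurd h (by simp)
  · obtain ⟨ha, hb⟩ : l = a ∧ r = b := by
      simpa [Prod.mk.injEq] using heq
    have hrr' : r < r' := by
      rcases lt_or_eq_of_le (show r ≤ r' by omega) with h | h
      · exact h
      · exfalso; apply hS; simp only [Option.some.injEq, Prod.mk.injEq]; omega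
    refine ⟨by omega, fun nL nR hnR => ?_⟩
    have hnL : (0:ℤ) ≤ nL := Int.ofNat_nonneg nL
    have hnR0 : (0:ℤ) ≤ nR := Int.ofNat_nonneg nR
    refine ⟨⟨?_, Or.inr ⟨l - nL, r + nR, by omega, rfl, by omega, by omega⟩⟩, ?_, ?_⟩
    · simp only [rho, Option.some.injEq, Prod.mk.injEq]; constructor <;> omega
    · simp only [ne_eq, Option.some.injEq, Prod.mk.injEq, not_and]; intro _; omega
    · simp only [rho, Option.some.injEq, Prod.mk.injEq]; constructor <;> omega


end RFI
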